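/- arXiv:2001.08117 — 2 statements merged into one kernel-verified Lean document; each statement's English description precedes it below -/
import Mathlib

section
/- Let p be a prime, s ∈ ℤ_{≥1}, a ∈ ℤ_p ∖ ℤ_{≤0}, and n ≥ 1. Then F_{a,…,a}(t)_{<p^n} ≡ Π_{i=0}^{n−1} [F_{a^{(i)},…,a^{(i)}}(t)_{<p}]^{p^i} mod pℤ_p[t]. -/
/-!
Write `k = p m + r` with `r < p`. The factors `a + j` of `(a)_k` divisible by `p` are those with
`j ≡ l (mod p)`, namely `p (a′ + i)`. Splitting them off from `(a)_k` and, with `a = 1`, from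
`k! = (1)_k`, the powers of `p` cancel and what is left besides the unit parts is `(a′)_m / m!`;
by Wilson's theorem every complete block of `p` unit factors is `≡ -1 (mod p)`. This gives the
Lucas-type congruence `A_{pm+r} ≡ A_r A′_m (mod p)` (both sides vanish when `r > l`), hence
`F_a(t)_{<p^{n+1}} ≡ F_a(t)_{<p} · F_{a′}(t^p)_{<p^{n+1}} ≡ F_a(t)_{<p} · (F_{a′}(t)_{<p^n})^p`
mod `p`, and the theorem follows by induction on `n`.
-/

open scoped Classical

namespace HGP

/-- `𝔽̄_p`, an algebraic closure of the prime field `𝔽_p`. -/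
abbrev Fbar (p : ℕ) [Fact p.Prime] : Type _ := AlgebraicClosure (ZMod p)

/-- `W = W(𝔽̄_p)`, the ring of Witt vectors of `𝔽̄_p`. -/
abbrev Wp (p : ℕ) [Fact p.Prime] : Type _ := WittVector p (Fbar p)

/-- `K = Frac W`. -/
abbrev Kp (p : ℕ) [Fact p.Prime] : Type _ := FractionRing (Wp p)

/-- The canonical embedding `ℤ_p = W(𝔽_p) → W(𝔽̄_p)`. -/
noncomputable def iota (p : ℕ) [Fact p.Prime] : ℤ_[p] →+* Wp p :=
  (WittVector.map (algebraMap (ZMod p) (Fbar p))).comp (WittVector.equiv p).symm.toRingHom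

/-- The canonical embedding `W → K`. -/
noncomputable def iotaK (p : ℕ) [Fact p.Prime] : Wp p →+* Kp p := algebraMap (Wp p) (Kp p)

/-- `l`: the unique integer in `{0,…,p−1}` with `a + l ≡ 0 mod p`. -/
noncomputable def dl (p : ℕ) [Fact p.Prime] (a : ℤ_[p]) : ℕ := (-a).appr 1

/-- `q := 4` if `p = 2` and `q := p` otherwise. -/
def qq (p : ℕ) : ℕ := if p = 2 then 4 else p

/-- `l′`: the unique integer in `{0,…,q−1}` with `a + l′ ≡ 0 mod q`. -/
noncomputable def dl' (p : ℕ) [Fact p.Prime] (a : ℤ_[p]) : ℕ :=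
  (-a).appr (if p = 2 then 2 else 1)

/-- `e := l′ − ⌊l′/p⌋`. -/
noncomputable def de (p : ℕ) [Fact p.Prime] (a : ℤ_[p]) : ℕ := dl' p a - dl' p a / p

/-- `a ∈ ℤ_p ∖ ℤ_{≤0}`, i.e. `a` is not a nonpositive rational integer. -/
def NotNonposInt (p : ℕ) [Fact p.Prime] (a : ℤ_[p]) : Prop := ∀ n : ℕ, a + (n : ℤ_[p]) ≠ 0

/-- `a′` is the Dwork prime of `a`, i.e. `p·a′ = a + l`. -/
def IsDworkPrime (p : ℕ) [Fact p.Prime] (a a' : ℤ_[p]) : Prop :=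
  (p : ℤ_[p]) * a' = a + (dl p a : ℤ_[p])

/-- `A k = ((a)_k / k!)^s ∈ ℤ_p`, characterized by `k!^s · A k = ((a)_k)^s`. -/
def IsHGCoeff (p : ℕ) [Fact p.Prime] (s : ℕ) (a : ℤ_[p]) (A : ℕ → ℤ_[p]) : Prop :=
  ∀ k : ℕ, (k.factorial : ℤ_[p]) ^ s * A k = ((ascPochhammer ℤ_[p] k).eval a) ^ s

/-- `f = (α ↦ c^α)` for `c ∈ 1 + pW`: `c^α` is uniquely characterized by
`c^α ≡ c^{α_n} mod p^n W` for any natural approximation `α_n` of `α` mod `p^n`. -/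
def IsCpow (p : ℕ) [Fact p.Prime] (c : Wp p) (f : ℤ_[p] → Wp p) : Prop :=
  ∀ (α : ℤ_[p]) (n : ℕ), f α - c ^ (α.appr n) ∈ Ideal.span {(p : Wp p) ^ n}

/-- The coefficients `B_k` of `Ĝ^{(σ)}_{a,…,a}(t)`, as elements of `K = Frac W`:
`B_k = (k+a)⁻¹ (A_k − (−1)^{se} A^{(1)}_{(k−l)/p} c^{(k−l)/p + a′})`. -/
noncomputable def BhatK (p : ℕ) [Fact p.Prime] (s : ℕ) (a a' : ℤ_[p]) (A A1 : ℕ → ℤ_[p])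
    (cpw : ℤ_[p] → Wp p) (k : ℕ) : Kp p :=
  ((k : Kp p) + iotaK p (iota p a))⁻¹ *
    (iotaK p (iota p (A k)) -
      (if dl p a ≤ k ∧ p ∣ (k - dl p a) then
        (-1 : Kp p) ^ (s * de p a) * iotaK p (iota p (A1 ((k - dl p a) / p))) *
          iotaK p (cpw ((((k - dl p a) / p : ℕ) : ℤ_[p]) + a'))
      else 0))

/-- `B : ℕ → W` is the coefficient function of `Ĝ^{(σ)}_{a,…,a}(t)`, characterized in `W` by
`(k+a)·B_k = A_k − (−1)^{se} A^{(1)}_{(k−l)/p} c^{(k−l)/p + a′}`. -/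
def IsBhat (p : ℕ) [Fact p.Prime] (s : ℕ) (a a' : ℤ_[p]) (A A1 : ℕ → ℤ_[p])
    (cpw : ℤ_[p] → Wp p) (B : ℕ → Wp p) : Prop :=
  ∀ k : ℕ, ((k : Wp p) + iota p a) * B k =
    iota p (A k) -
      (if dl p a ≤ k ∧ p ∣ (k - dl p a) then
        (-1 : Wp p) ^ (s * de p a) * iota p (A1 ((k - dl p a) / p)) *
          cpw ((((k - dl p a) / p : ℕ) : ℤ_[p]) + a')
      else 0)

/-- A function `ℕ → K` is Lipschitz: it takes values in `W` and
`p^m ∣ (n − n′)` implies `f n − f n′ ∈ p^m W`. -/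
def LipschitzSeq (p : ℕ) [Fact p.Prime] (f : ℕ → Kp p) : Prop :=
  (∀ n : ℕ, f n ∈ (iotaK p).range) ∧
    ∀ n n' m : ℕ, ((p : ℤ) ^ m ∣ (n : ℤ) - (n' : ℤ)) →
      ∃ w : Wp p, f n - f n' = (p : Kp p) ^ m * iotaK p w

/-- `L` is the `p`-adic limit of the sequence `s` in `W`. -/
def WLim (p : ℕ) [Fact p.Prime] (s : ℕ → Wp p) (L : Wp p) : Prop :=
  ∀ m : ℕ, ∃ M : ℕ, ∀ n ≥ M, L - s n ∈ Ideal.span {(p : Wp p) ^ m}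

/-- `{α}_k := Π_{1 ≤ i ≤ k, p ∤ (α+i−1)} (α+i−1)`. -/
noncomputable def curly (p : ℕ) [Fact p.Prime] (α : ℤ_[p]) (k : ℕ) : ℤ_[p] :=
  ∏ j ∈ Finset.range k, if (p : ℤ_[p]) ∣ (α + (j : ℤ_[p])) then 1 else (α + (j : ℤ_[p]))

/-- `W/p^n W`. -/
abbrev Qn (p : ℕ) [Fact p.Prime] (n : ℕ) := Wp p ⧸ Ideal.span {(p : Wp p) ^ n}

/-- Laurent polynomials over `W/p^n`, obtained from polynomials over `W`. -/
noncomputable def laurentOfPolyW (p : ℕ) [Fact p.Prime] (n : ℕ) :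
    Polynomial (Wp p) →+* LaurentPolynomial (Qn p n) :=
  (Polynomial.toLaurent).comp
    (Polynomial.mapRingHom (Ideal.Quotient.mk (Ideal.span {(p : Wp p) ^ n})))

/-- `R_n := (W/p^n)[t,t⁻¹, h(t)⁻¹]`, the localization of the Laurent polynomial ring
over `W/p^n` away from (the image of) `h`. -/
abbrev Rn (p : ℕ) [Fact p.Prime] (h : Polynomial (Wp p)) (n : ℕ) :=
  Localization.Away (laurentOfPolyW p n h)

/-- The canonical map from Laurent polynomials over `W/p^n` to `R_n`. -/
noncomputable def mkRn (p : ℕ) [Fact p.Prime] (h : Polynomial (Wp p)) (n : ℕ) :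
    LaurentPolynomial (Qn p n) →+* Rn p h n := algebraMap _ _

/-- The canonical map from polynomials over `W` to `R_n`. -/
noncomputable def toRn (p : ℕ) [Fact p.Prime] (h : Polynomial (Wp p)) (n : ℕ) :
    Polynomial (Wp p) →+* Rn p h n := (mkRn p h n).comp (laurentOfPolyW p n)

open Finset Polynomial PadicInt

lemma prod_range_add_natCast_eq_prod_univ {M : Type*} [CommMonoid M] {n : ℕ} [NeZero n]
    (g : ZMod n → M) (c : ZMod n) : ∏ j ∈ range n, g (c + j) = ∏ x, g x :=
  prod_nbij' (fun j => c + j) (fun x => (x - c).val) (by simp) (by simp [ZMod.val_lt])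
    (fun j hj => by simp [ZMod.val_natCast_of_lt (mem_range.mp hj)]) (by simp) (by simp)

lemma sum_range_mul_C_mul_X_pow {R : Type*} [CommSemiring R] {p : ℕ} {f g h : ℕ → R}
    (hf : ∀ m, ∀ r < p, f (p * m + r) = g r * h m) (N : ℕ) :
    ∑ k ∈ range (p * N), C (f k) * X ^ k =
      (∑ r ∈ range p, C (g r) * X ^ r) * ∑ m ∈ range N, C (h m) * X ^ (p * m) := by
  induction N with
  | zero => simp
  | succ N ih =>
    rw [mul_add_one, sum_range_add, ih, sum_range_succ _ N, mul_add]
    congr 1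
    rw [Finset.sum_mul]
    refine Finset.sum_congr rfl fun r hr => ?_
    rw [hf N r (mem_range.mp hr), C_mul, pow_add]
    ring

lemma sum_range_C_mul_X_pow_mul {p : ℕ} [Fact p.Prime] (c : ℕ → ZMod p) (N : ℕ) :
    ∑ m ∈ range N, C (c m) * X ^ (p * m) = (∑ m ∈ range N, C (c m) * X ^ m) ^ p := by
  rw [← ZMod.expand_card, map_sum]
  simp [pow_mul]

section PadicResidues

variable {p : ℕ} [Fact p.Prime]

lemma toZMod_eq_zero_iff_dvd {x : ℤ_[p]} : toZMod x = 0 ↔ (p : ℤ_[p]) ∣ x := by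
  rw [← RingHom.mem_ker, ker_toZMod, maximalIdeal_eq_span_p, Ideal.mem_span_singleton]

lemma toZMod_eq_neg_of_mul_eq {a a' : ℤ_[p]} {l : ℕ} (hD : (p : ℤ_[p]) * a' = a + l) :
    toZMod a = -l := by
  have h := congrArg toZMod hD
  rw [map_mul, map_natCast, ZMod.natCast_self, zero_mul, map_add, map_natCast] at h
  linear_combination -h

lemma natCast_dvd_add_iff_eq {a a' : ℤ_[p]} {l r : ℕ} (hl : l < p)
    (hD : (p : ℤ_[p]) * a' = a + l) (hr : r < p) (m : ℕ) :
    (p : ℤ_[p]) ∣ a + (p * m + r : ℕ) ↔ r = l := by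
  rw [← toZMod_eq_zero_iff_dvd, map_add, toZMod_eq_neg_of_mul_eq hD, map_natCast, Nat.cast_add,
    Nat.cast_mul, ZMod.natCast_self, zero_mul, zero_add, neg_add_eq_zero,
    ZMod.natCast_eq_natCast_iff', Nat.mod_eq_of_lt hl, Nat.mod_eq_of_lt hr, eq_comm]

lemma prod_range_add_natCast_ite_eq_neg_one (c : ZMod p) :
    ∏ j ∈ range p, (if c + j = 0 then 1 else c + j) = -1 := by
  rw [prod_range_add_natCast_eq_prod_univ (fun x => if x = 0 then 1 else x),
    ← prod_range_add_natCast_eq_prod_univ _ 0, range_eq_Ico,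
    prod_eq_prod_Ico_succ_bot (Fact.out : p.Prime).pos, ← ZMod.prod_Ico_one_prime p]
  simp only [zero_add, Nat.cast_zero, if_pos, one_mul]
  refine prod_congr rfl fun j hj => if_neg ?_
  obtain ⟨hj1, hjp⟩ := mem_Ico.mp hj
  rw [ZMod.natCast_eq_zero_iff]
  exact fun h => (Nat.le_of_dvd hj1 h).not_gt hjp

lemma curly_succ (a : ℤ_[p]) (k : ℕ) :
    curly p a (k + 1) =
      curly p a k * if (p : ℤ_[p]) ∣ a + (k : ℤ_[p]) then 1 else a + (k : ℤ_[p]) :=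
  prod_range_succ _ _

/-- Splitting off the factors of `(a)_{pm+r}` divisible by `p`: they are `p (a' + j)` for
`j < m`, plus `p (a' + m)` once `r` has passed `l`. -/
lemma ascPochhammer_eval_eq_curly_mul {a a' : ℤ_[p]} {l : ℕ} (hl : l < p)
    (hD : (p : ℤ_[p]) * a' = a + l) (m : ℕ) {r : ℕ} (hr : r ≤ p) :
    (ascPochhammer ℤ_[p] (p * m + r)).eval a =
      curly p a (p * m + r) * (p : ℤ_[p]) ^ (m + if l < r then 1 else 0) *
        (ascPochhammer ℤ_[p] (m + if l < r then 1 else 0)).eval a' := by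
  set S : ℕ → ℕ → Prop := fun m r => (ascPochhammer ℤ_[p] (p * m + r)).eval a =
      curly p a (p * m + r) * (p : ℤ_[p]) ^ (m + if l < r then 1 else 0) *
        (ascPochhammer ℤ_[p] (m + if l < r then 1 else 0)).eval a'
  have step : ∀ m r, r < p → S m r → S m (r + 1) := by
    intro m r hr h
    simp only [S] at h ⊢
    rw [← add_assoc, ascPochhammer_succ_eval, curly_succ, h, natCast_dvd_add_iff_eq hl hD hr]
    by_cases hrl : r = l
    · subst hrl
      have hfactor : a + ((p * m + r : ℕ) : ℤ_[p]) = p * (a' + m) := by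
        push_cast; linear_combination -hD
      simp only [lt_irrefl, lt_add_one, if_true, if_false, add_zero, hfactor,
        ascPochhammer_succ_eval]
      ring
    · have hlt : (l < r + 1) ↔ l < r := by omega
      simp only [hrl, if_false, hlt]
      ring
  have block : ∀ m, S m 0 → ∀ r ≤ p, S m r := by
    intro m h0 r hr
    induction r with
    | zero => exact h0
    | succ r ih => exact step m r (by omega) (ih (by omega))
  refine block m ?_ r hr
  induction m with
  | zero => simp [S, curly]
  | succ m ih =>
    have h := block m ih p le_rfl
    simp only [S, if_pos hl, add_zero, mul_add, mul_one] at h ⊢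
    exact h

lemma curly_eq_ascPochhammer_eval {a a' : ℤ_[p]} {l r : ℕ} (hl : l < p)
    (hD : (p : ℤ_[p]) * a' = a + l) (hr : r ≤ l) :
    curly p a r = (ascPochhammer ℤ_[p] r).eval a := by
  simpa [if_neg (not_lt.mpr hr)] using
    (ascPochhammer_eval_eq_curly_mul hl hD 0 (hr.trans hl.le)).symm

lemma factorial_eq_curly_mul (m : ℕ) {r : ℕ} (hr : r < p) :
    ((p * m + r).factorial : ℤ_[p]) =
      curly p 1 (p * m + r) * (p : ℤ_[p]) ^ m * m.factorial := by
  have hp := (Fact.out : p.Prime).pos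
  have hD : (p : ℤ_[p]) * 1 = 1 + ((p - 1 : ℕ) : ℤ_[p]) := by
    rw [Nat.cast_sub hp]; ring
  simpa [if_neg (show ¬ p - 1 < r by omega)] using
    ascPochhammer_eval_eq_curly_mul (by omega : p - 1 < p) hD m hr.le

lemma factorial_eq_curly {r : ℕ} (hr : r < p) : (r.factorial : ℤ_[p]) = curly p 1 r := by
  simpa using factorial_eq_curly_mul (p := p) 0 hr

lemma toZMod_curly (a : ℤ_[p]) (k : ℕ) :
    toZMod (curly p a k) = ∏ j ∈ range k, if toZMod a + j = 0 then 1 else toZMod a + j := by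
  rw [curly, map_prod]
  refine prod_congr rfl fun j _ => ?_
  rw [← map_natCast toZMod j, ← map_add]
  simp only [toZMod_eq_zero_iff_dvd]
  split_ifs <;> simp

/-- By Wilson's theorem each full block of `p` consecutive factors contributes `-1`. -/
lemma toZMod_curly_mul_add (a : ℤ_[p]) (m r : ℕ) :
    toZMod (curly p a (p * m + r)) = (-1) ^ m * toZMod (curly p a r) := by
  induction m with
  | zero => simp
  | succ m ih =>
    rw [show p * (m + 1) + r = p * m + r + p by ring, toZMod_curly, prod_range_add,
      ← toZMod_curly, ih]
    simp_rw [Nat.cast_add, ← add_assoc, prod_range_add_natCast_ite_eq_neg_one]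
    ring

section Lucas

variable {s : ℕ} {a a' : ℤ_[p]} {l : ℕ} {A A' : ℕ → ℤ_[p]}

lemma prime_pow_mul_factorial_ne_zero (m : ℕ) : (p : ℤ_[p]) ^ m * m.factorial ≠ 0 :=
  mul_ne_zero (pow_ne_zero _ (Nat.cast_ne_zero.mpr (Fact.out : p.Prime).ne_zero))
    (Nat.cast_ne_zero.mpr m.factorial_ne_zero)

lemma toZMod_curly_one_mul_add (m : ℕ) {r : ℕ} (hr : r < p) :
    toZMod (curly p 1 (p * m + r)) = (-1) ^ m * r.factorial := by
  rw [toZMod_curly_mul_add, ← factorial_eq_curly hr, map_natCast]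

lemma toZMod_curly_one_ne_zero (m : ℕ) {r : ℕ} (hr : r < p) :
    toZMod (curly p 1 (p * m + r)) ≠ 0 := by
  have hfact : (r.factorial : ZMod p) ≠ 0 := by
    rw [Ne, ZMod.natCast_eq_zero_iff, (Fact.out : p.Prime).dvd_factorial]
    omega
  rw [toZMod_curly_one_mul_add m hr]
  exact mul_ne_zero (pow_ne_zero _ (neg_ne_zero.mpr one_ne_zero)) hfact

lemma toZMod_hgCoeff_mul_add_of_le (hl : l < p) (hD : (p : ℤ_[p]) * a' = a + l)
    (hA : IsHGCoeff p s a A) (hA' : IsHGCoeff p s a' A') (m : ℕ) {r : ℕ} (hr : r ≤ l) :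
    toZMod (A (p * m + r)) = toZMod (A r) * toZMod (A' m) := by
  have hrp : r < p := hr.trans_lt hl
  have hexact : curly p 1 (p * m + r) ^ s * A (p * m + r) = curly p a (p * m + r) ^ s * A' m := by
    refine mul_left_cancel₀ (pow_ne_zero s (prime_pow_mul_factorial_ne_zero m)) ?_
    have h := hA (p * m + r)
    rw [factorial_eq_curly_mul m hrp, ascPochhammer_eval_eq_curly_mul hl hD m hrp.le,
      if_neg (not_lt.mpr hr), add_zero] at h
    linear_combination h - (curly p a (p * m + r) * (p : ℤ_[p]) ^ m) ^ s * hA' m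
  refine mul_left_cancel₀ (pow_ne_zero s (toZMod_curly_one_ne_zero m hrp)) ?_
  have h := congrArg toZMod hexact
  have hr' := congrArg toZMod (hA r)
  rw [← curly_eq_ascPochhammer_eval hl hD hr] at hr'
  simp only [map_mul, map_pow, map_natCast, toZMod_curly_one_mul_add m hrp,
    toZMod_curly_mul_add] at h hr' ⊢
  linear_combination h - ((-1) ^ m) ^ s * toZMod (A' m) * hr'

lemma toZMod_hgCoeff_mul_add_eq_zero (hs : s ≠ 0) (hl : l < p) (hD : (p : ℤ_[p]) * a' = a + l)
    (hA : IsHGCoeff p s a A) (hA' : IsHGCoeff p s a' A') (m : ℕ) {r : ℕ} (hlr : l < r)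
    (hr : r < p) : toZMod (A (p * m + r)) = 0 := by
  have hexact : curly p 1 (p * m + r) ^ s * A (p * m + r) =
      ((p : ℤ_[p]) * curly p a (p * m + r) * (m + 1)) ^ s * A' (m + 1) := by
    refine mul_left_cancel₀ (pow_ne_zero s (prime_pow_mul_factorial_ne_zero m)) ?_
    have h := hA (p * m + r)
    rw [factorial_eq_curly_mul m hr, ascPochhammer_eval_eq_curly_mul hl hD m hr.le,
      if_pos hlr] at h
    have h' := hA' (m + 1)
    rw [Nat.factorial_succ, Nat.cast_mul] at h'
    push_cast at h'
    generalize (m : ℤ_[p]) + 1 = μ at h' ⊢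
    linear_combination h - (curly p a (p * m + r) * (p : ℤ_[p]) ^ (m + 1)) ^ s * h'
  have h := congrArg toZMod hexact
  simp only [map_mul, map_pow, map_natCast, ZMod.natCast_self, zero_mul, zero_pow hs] at h
  exact (mul_eq_zero.mp h).resolve_left (pow_ne_zero s (toZMod_curly_one_ne_zero m hr))

theorem toZMod_hgCoeff_mul_add (hs : s ≠ 0) (hl : l < p) (hD : (p : ℤ_[p]) * a' = a + l)
    (hA : IsHGCoeff p s a A) (hA' : IsHGCoeff p s a' A') (m : ℕ) {r : ℕ} (hr : r < p) :
    toZMod (A (p * m + r)) = toZMod (A r) * toZMod (A' m) := by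
  rcases le_or_gt r l with hrl | hlr
  · exact toZMod_hgCoeff_mul_add_of_le hl hD hA hA' m hrl
  · have hAr := toZMod_hgCoeff_mul_add_eq_zero hs hl hD hA hA' 0 hlr hr
    rw [mul_zero, zero_add] at hAr
    rw [toZMod_hgCoeff_mul_add_eq_zero hs hl hD hA hA' m hlr hr, hAr, zero_mul]

end Lucas

lemma map_toZMod_trunc_mk (A : ℕ → ℤ_[p]) (N : ℕ) :
    (PowerSeries.trunc N (PowerSeries.mk A)).map toZMod =
      ∑ k ∈ range N, C (toZMod (A k)) * X ^ k := by
  simp [PowerSeries.trunc_apply, Nat.Ico_zero_eq_range, Polynomial.map_sum, C_mul_X_pow_eq_monomial]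


lemma dl_lt (a : ℤ_[p]) : dl p a < p := by
  simpa [dl] using appr_lt (-a) 1

lemma map_toZMod_trunc_prime_pow {s : ℕ} (hs : s ≠ 0) (as : ℕ → ℤ_[p])
    (hasD : ∀ i, IsDworkPrime p (as i) (as (i + 1))) (AF : ℕ → ℕ → ℤ_[p])
    (hAF : ∀ i, IsHGCoeff p s (as i) (AF i)) (n : ℕ) :
    (PowerSeries.trunc (p ^ n) (PowerSeries.mk (AF 0))).map toZMod =
      ∏ i ∈ range n, ((PowerSeries.trunc p (PowerSeries.mk (AF i))).map toZMod) ^ p ^ i := by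
  induction n generalizing as AF with
  | zero =>
    have h := hAF 0 0
    simp only [Nat.factorial_zero, Nat.cast_one, one_pow, one_mul, ascPochhammer_zero,
      eval_one] at h
    simp [map_toZMod_trunc_mk, h]
  | succ n ih =>
    have hLucas : ∀ m, ∀ r < p,
        toZMod (AF 0 (p * m + r)) = toZMod (AF 0 r) * toZMod (AF 1 m) := fun m r hr =>
      toZMod_hgCoeff_mul_add hs (dl_lt (as 0)) (hasD 0) (hAF 0) (hAF 1) m hr
    rw [map_toZMod_trunc_mk, pow_succ', sum_range_mul_C_mul_X_pow hLucas,
      sum_range_C_mul_X_pow_mul, ← map_toZMod_trunc_mk, ← map_toZMod_trunc_mk,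
      ih (fun i => as (i + 1)) (fun i => hasD (i + 1)) (fun i => AF (i + 1)) (fun i => hAF (i + 1)),
      prod_range_succ', ← prod_pow, pow_zero, pow_one, mul_comm]
    simp_rw [← pow_mul, ← pow_succ]

end PadicResidues

theorem statement5_general (p : ℕ) [Fact p.Prime] (s : ℕ) (hs : 1 ≤ s)
    (as : ℕ → ℤ_[p]) (hasD : ∀ i, IsDworkPrime p (as i) (as (i + 1)))
    (AF : ℕ → ℕ → ℤ_[p]) (hAF : ∀ i, IsHGCoeff p s (as i) (AF i))
    (n : ℕ) :
    ∀ m : ℕ,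
      Polynomial.coeff
        ((PowerSeries.mk (AF 0)).trunc (p ^ n) -
          ∏ i ∈ Finset.range n, ((PowerSeries.mk (AF i)).trunc p) ^ (p ^ i)) m
        ∈ Ideal.span {(p : ℤ_[p])} := by
  intro m
  rw [← maximalIdeal_eq_span_p, ← ker_toZMod, RingHom.mem_ker, ← coeff_map,
    Polynomial.map_sub, Polynomial.map_prod, map_toZMod_trunc_prime_pow (Nat.one_le_iff_ne_zero.mp hs) as hasD AF hAF n]
  simp_rw [Polynomial.map_pow, sub_self, coeff_zero]

/-- `F_{a,…,a}(t)_{<p^n} ≡ Π_{i=0}^{n−1} [F_{a^{(i)},…,a^{(i)}}(t)_{<p}]^{p^i}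
mod p ℤ_p[t]`. -/
theorem statement5 (p : ℕ) [Fact p.Prime] (s : ℕ) (hs : 1 ≤ s)
    (a : ℤ_[p]) (ha : NotNonposInt p a)
    (as : ℕ → ℤ_[p]) (has0 : as 0 = a) (hasD : ∀ i, IsDworkPrime p (as i) (as (i + 1)))
    (AF : ℕ → ℕ → ℤ_[p]) (hAF : ∀ i, IsHGCoeff p s (as i) (AF i))
    (n : ℕ) (hn : 1 ≤ n) :
    ∀ m : ℕ,
      Polynomial.coeff
        ((PowerSeries.mk (AF 0)).trunc (p ^ n) -
          ∏ i ∈ Finset.range n, ((PowerSeries.mk (AF i)).trunc p) ^ (p ^ i)) m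
        ∈ Ideal.span {(p : ℤ_[p])} :=
  statement5_general p s hs as hasD AF hAF n

end HGP
end

section
/- Let p be a prime and c ∈ 1+qW. Define f: ℤ_{≥1} → K by f(n) := (c^{n/p} − 1)/n if p | n, and f(n) := 0 if p ∤ n. Then f(n) ∈ W for every n ≥ 1, and for all n₁, n₂ ∈ ℤ_{≥1} and m ∈ ℤ_{≥0}, p^m | (n₁ − n₂) implies f(n₁) − f(n₂) ∈ p^m W. -/
/-! Write `c = 1 + q u`. Expanding `c^k` binomially and using `k·C(k-1, i) = (i+1)·C(k, i+1)`,
`(c^k - 1)/(p k) = Σ_{i<k} C(k-1, i) · (q^{i+1}/(p(i+1))) · u^{i+1}`, and the coefficients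
`q^{i+1}/(p(i+1))` lie in `ℤ_p` since `v_p(i+1) + 1 ≤ v_p(q^{i+1})`. If `p^m ∣ D`, Vandermonde writes
`C(K+D, i) - C(K, i)` as a sum of terms `C(K, i-t) C(D, t)` with `1 ≤ t ≤ i`, and
`t·C(D, t) = D·C(D-1, t-1)` gives `v_p(C(D, t)) ≥ m - v_p(t)`. The surplus
`v_p(q^{i+1}) ≥ v_p(t) + v_p(i+1) + 2` (for `p = 2` this needs `q = 4`) then yields
`p^{m+1} ∣ (C(K+D, i) - C(K, i)) · q^{i+1}/(p(i+1))`, coefficientwise. -/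

open scoped Classical

namespace HGP

lemma qq_eq_pow (p : ℕ) : qq p = p ^ (if p = 2 then 2 else 1) := by
  unfold qq; split_ifs with h <;> simp [h]

section

variable {p : ℕ}

lemma two_mul_factorization_add_one_le (hp3 : 3 ≤ p) {i : ℕ} (hi : i ≠ 0) :
    2 * i.factorization p + 1 ≤ i := by
  set v := i.factorization p
  have bernoulli : 1 + (v : ℤ) * 2 ≤ (1 + 2) ^ v := one_add_mul_le_pow (by norm_num) v
  have : 2 * v + 1 ≤ 3 ^ v := by
    zify; norm_num at bernoulli; linarith
  have : 3 ^ v ≤ i := (Nat.pow_le_pow_left hp3 v).trans (Nat.ordProj_le p hi)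
  omega

lemma pow_factorization_succ_dvd_qq_pow {i : ℕ} (hi : i ≠ 0) :
    p ^ (i.factorization p + 1) ∣ qq p ^ i := by
  rw [qq_eq_pow p, ← pow_mul]
  refine Nat.pow_dvd_pow p ?_
  have := Nat.factorization_lt p hi
  split_ifs <;> omega

lemma pow_factorization_add_factorization_add_two_dvd_qq_pow (hp : p.Prime) {t i : ℕ}
    (ht : t ≠ 0) (hti : t < i) : p ^ (t.factorization p + i.factorization p + 2) ∣ qq p ^ i := by
  rw [qq_eq_pow p, ← pow_mul]
  refine Nat.pow_dvd_pow p ?_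
  split_ifs with hp2
  · have := Nat.factorization_lt p ht
    have := Nat.factorization_lt p (n := i) (by omega)
    omega
  · have hp3 : 3 ≤ p := lt_of_le_of_ne hp.two_le (Ne.symm hp2)
    have := two_mul_factorization_add_one_le hp3 ht
    have := two_mul_factorization_add_one_le hp3 (i := i) (by omega)
    omega

end

namespace PadicInt

variable {p : ℕ} [hp : Fact p.Prime]

lemma associated_natCast_pow_factorization {a : ℕ} (ha : a ≠ 0) :
    Associated (a : ℤ_[p]) ((p : ℤ_[p]) ^ a.factorization p) := by
  have hunit : IsUnit ((ordCompl[p] a : ℕ) : ℤ_[p]) := by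
    rw [PadicInt.isUnit_iff, PadicInt.norm_natCast_eq_one_iff]
    exact Nat.coprime_ordCompl hp.out ha
  conv_lhs => rw [← Nat.ordProj_mul_ordCompl_eq_self a p]
  push_cast
  exact associated_mul_unit_left _ _ hunit

lemma natCast_mul_dvd_qq_pow (i : ℕ) : (p : ℤ_[p]) * (i + 1 : ℕ) ∣ (qq p : ℤ_[p]) ^ (i + 1) := by
  have hassoc := (Associated.refl (p : ℤ_[p])).mul_mul
    (associated_natCast_pow_factorization i.succ_ne_zero)
  rw [hassoc.dvd_iff_dvd_left, ← pow_succ']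
  exact_mod_cast Nat.cast_dvd_cast (pow_factorization_succ_dvd_qq_pow i.succ_ne_zero)

lemma pow_mul_dvd_choose_mul_qq_pow {m D t i : ℕ} (hD : p ^ m ∣ D) (ht : t ≠ 0) (hti : t < i) :
    (p : ℤ_[p]) ^ (m + 2) * i ∣ D.choose t * (qq p : ℤ_[p]) ^ i := by
  have ht0 : (t : ℤ_[p]) ≠ 0 := by exact_mod_cast ht
  rw [← mul_dvd_mul_iff_left ht0, ← mul_assoc]
  have hassoc := ((associated_natCast_pow_factorization ht).mul_mul
    (Associated.refl ((p : ℤ_[p]) ^ (m + 2)))).mul_mul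
    (associated_natCast_pow_factorization (a := i) (by omega))
  have hchoose : t * D.choose t = D * (D - 1).choose (t - 1) := by
    obtain ⟨t, rfl⟩ := Nat.exists_eq_succ_of_ne_zero ht
    rcases D with _ | D
    · simp
    · simpa [mul_comm] using (Nat.add_one_mul_choose_eq D t).symm
  have hnat :
      p ^ (t.factorization p + (m + 2) + i.factorization p) ∣ t * D.choose t * qq p ^ i := by
    rw [hchoose, show t.factorization p + (m + 2) + i.factorization p
      = m + (t.factorization p + i.factorization p + 2) by ring, pow_add, mul_assoc]
    exact mul_dvd_mul hD
      ((pow_factorization_add_factorization_add_two_dvd_qq_pow hp.out ht hti).mul_left _)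
  rw [hassoc.dvd_iff_dvd_left, ← pow_add, ← pow_add, ← mul_assoc]
  exact_mod_cast Nat.cast_dvd_cast hnat

lemma pow_mul_dvd_choose_sub_choose_mul_qq_pow {m D : ℕ} (hD : p ^ m ∣ D) (K j : ℕ) :
    (p : ℤ_[p]) ^ (m + 2) * (j + 1 : ℕ) ∣
      (((K + D).choose j : ℤ_[p]) - K.choose j) * (qq p : ℤ_[p]) ^ (j + 1) := by
  have vandermonde : ((K + D).choose j : ℤ_[p]) - K.choose j =
      ∑ k ∈ Finset.range j, (K.choose k : ℤ_[p]) * D.choose (j - k) := by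
    rw [Nat.add_choose_eq, Finset.Nat.sum_antidiagonal_eq_sum_range_succ
      (fun a b => K.choose a * D.choose b), Finset.sum_range_succ]
    simp
  rw [vandermonde, Finset.sum_mul]
  refine Finset.dvd_sum fun k hk => ?_
  have hk : k < j := Finset.mem_range.mp hk
  rw [mul_assoc]
  exact (pow_mul_dvd_choose_mul_qq_pow hD (by omega) (by omega)).mul_left _

end PadicInt

section

variable (p : ℕ) [Fact p.Prime]

noncomputable def qqPowDiv (i : ℕ) : ℤ_[p] :=
  (PadicInt.natCast_mul_dvd_qq_pow (p := p) i).choose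

lemma natCast_mul_qqPowDiv (i : ℕ) :
    (p : ℤ_[p]) * (i + 1 : ℕ) * qqPowDiv p i = (qq p : ℤ_[p]) ^ (i + 1) :=
  (PadicInt.natCast_mul_dvd_qq_pow i).choose_spec.symm

variable {p}

lemma pow_succ_dvd_choose_sub_choose_mul_qqPowDiv {m D : ℕ} (hD : p ^ m ∣ D) (K j : ℕ) :
    (p : ℤ_[p]) ^ (m + 1) ∣ (((K + D).choose j : ℤ_[p]) - K.choose j) * qqPowDiv p j := by
  have h0 : (p : ℤ_[p]) * (j + 1 : ℕ) ≠ 0 := by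
    exact_mod_cast Nat.mul_ne_zero (Fact.out : p.Prime).ne_zero j.succ_ne_zero
  rw [← mul_dvd_mul_iff_right h0, mul_assoc, mul_comm (qqPowDiv p j), natCast_mul_qqPowDiv,
    ← mul_assoc, ← pow_succ]
  exact PadicInt.pow_mul_dvd_choose_sub_choose_mul_qq_pow hD K j

end

section

variable {p : ℕ} [Fact p.Prime]

lemma iota_injective : Function.Injective (iota p) :=
  (WittVector.map_injective _ (algebraMap (ZMod p) (Fbar p)).injective).comp
    (WittVector.equiv p).symm.injective

instance : CharZero (Wp p) := charZero_of_injective_ringHom iota_injective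

variable (p) in
noncomputable def powSubOneQuot (u : Wp p) (k : ℕ) : Wp p :=
  ∑ i ∈ Finset.range k, iota p ((k - 1).choose i * qqPowDiv p i) * u ^ (i + 1)

lemma natCast_mul_powSubOneQuot (u : Wp p) (k : ℕ) :
    (p * k : Wp p) * powSubOneQuot p u k = (1 + qq p * u) ^ k - 1 := by
  rcases k with _ | K
  · simp [powSubOneQuot]
  have hcoeff (i : ℕ) : (p : ℤ_[p]) * (K + 1 : ℕ) * (K.choose i * qqPowDiv p i) =
      (K + 1).choose (i + 1) * (qq p : ℤ_[p]) ^ (i + 1) := by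
    rw [← natCast_mul_qqPowDiv]
    have := congrArg (Nat.cast : ℕ → ℤ_[p]) (Nat.add_one_mul_choose_eq K i)
    push_cast at this ⊢
    linear_combination (p : ℤ_[p]) * qqPowDiv p i * this
  rw [powSubOneQuot, Finset.mul_sum, add_comm (1 : Wp p), add_pow,
    Finset.sum_range_succ' _ (K + 1)]
  simp only [Nat.choose_zero_right, pow_zero, one_pow, mul_one, Nat.cast_one,
    add_sub_cancel_right, Nat.add_sub_cancel]
  refine Finset.sum_congr rfl fun i _ => ?_
  have := congrArg (iota p) (hcoeff i)
  rw [map_mul, map_mul, map_natCast, map_natCast] at this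
  rw [← mul_assoc, this, map_mul, map_natCast, map_pow, map_natCast, mul_pow]
  ring

lemma powSubOneQuot_eq_sum_range (u : Wp p) {k N : ℕ} (hk : k ≠ 0) (hkN : k ≤ N) :
    powSubOneQuot p u k =
      ∑ i ∈ Finset.range N, iota p ((k - 1).choose i * qqPowDiv p i) * u ^ (i + 1) := by
  refine Finset.sum_subset (Finset.range_subset_range.mpr hkN) fun i _ hik => ?_
  rw [Nat.choose_eq_zero_of_lt (by simp at hik; omega)]
  simp

lemma pow_succ_dvd_powSubOneQuot_add_sub (u : Wp p) {k m D : ℕ} (hk : k ≠ 0) (hD : p ^ m ∣ D) :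
    (p : Wp p) ^ (m + 1) ∣ powSubOneQuot p u (k + D) - powSubOneQuot p u k := by
  rw [powSubOneQuot_eq_sum_range u hk (Nat.le_add_right k D), powSubOneQuot,
    ← Finset.sum_sub_distrib]
  refine Finset.dvd_sum fun i _ => ?_
  rw [← sub_mul, ← map_sub, ← sub_mul, show k + D - 1 = k - 1 + D by omega]
  have := map_dvd (iota p) (pow_succ_dvd_choose_sub_choose_mul_qqPowDiv hD (k - 1) i)
  rw [map_pow, map_natCast] at this
  exact this.mul_right _

lemma pow_succ_dvd_powSubOneQuot_sub (u : Wp p) {k₁ k₂ m : ℕ} (hk₁ : k₁ ≠ 0) (hk₂ : k₂ ≠ 0)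
    (h : (p : ℤ) ^ m ∣ (k₁ : ℤ) - k₂) :
    (p : Wp p) ^ (m + 1) ∣ powSubOneQuot p u k₁ - powSubOneQuot p u k₂ := by
  wlog hle : k₂ ≤ k₁ generalizing k₁ k₂
  · exact dvd_sub_comm.mp (this hk₂ hk₁ (dvd_sub_comm.mp h) (by omega))
  obtain ⟨D, rfl⟩ := Nat.exists_eq_add_of_le hle
  refine pow_succ_dvd_powSubOneQuot_add_sub u hk₂ ?_
  exact_mod_cast (by simpa using h : (p : ℤ) ^ m ∣ D)

variable (p) in
noncomputable def powSubOneQuotOfDvd (u : Wp p) (n : ℕ) : Wp p :=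
  if p ∣ n then powSubOneQuot p u (n / p) else 0

instance : CharZero (Kp p) :=
  charZero_of_injective_algebraMap (IsFractionRing.injective (Wp p) (Kp p))

lemma iotaK_powSubOneQuotOfDvd (u : Wp p) {n : ℕ} (hn : n ≠ 0) :
    iotaK p (powSubOneQuotOfDvd p u n) =
      if p ∣ n then (iotaK p ((1 + (qq p : Wp p) * u) ^ (n / p)) - 1) / (n : Kp p) else 0 := by
  unfold powSubOneQuotOfDvd
  split_ifs with hpn
  · rw [eq_div_iff (Nat.cast_ne_zero.mpr hn), ← map_one (iotaK p), ← map_sub,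
      ← natCast_mul_powSubOneQuot, ← Nat.cast_mul, Nat.mul_div_cancel' hpn, map_mul, map_natCast,
      mul_comm]
  · exact map_zero _

lemma pow_dvd_powSubOneQuotOfDvd_sub (u : Wp p) {n₁ n₂ m : ℕ} (hn₁ : n₁ ≠ 0) (hn₂ : n₂ ≠ 0)
    (h : (p : ℤ) ^ m ∣ (n₁ : ℤ) - n₂) :
    (p : Wp p) ^ m ∣ powSubOneQuotOfDvd p u n₁ - powSubOneQuotOfDvd p u n₂ := by
  rcases m with _ | m
  · simp
  have hp : p.Prime := Fact.out
  have hpdvd : (p : ℤ) ∣ (n₁ : ℤ) - n₂ := (dvd_pow_self _ m.succ_ne_zero).trans h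
  have hdvd_iff : p ∣ n₁ ↔ p ∣ n₂ := by
    rw [← Int.natCast_dvd_natCast, ← Int.natCast_dvd_natCast (m := p)]
    exact ⟨fun h₁ => (dvd_sub_right h₁).mp hpdvd, fun h₂ => (dvd_sub_left h₂).mp hpdvd⟩
  by_cases h₁ : p ∣ n₁
  · obtain ⟨k₁, rfl⟩ := h₁
    obtain ⟨k₂, rfl⟩ := hdvd_iff.mp ⟨k₁, rfl⟩
    simp only [powSubOneQuotOfDvd, dvd_mul_right, if_true, Nat.mul_div_cancel_left _ hp.pos]
    refine pow_succ_dvd_powSubOneQuot_sub u (right_ne_zero_of_mul hn₁)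
      (right_ne_zero_of_mul hn₂) ?_
    push_cast at h
    rw [pow_succ', ← mul_sub] at h
    exact (mul_dvd_mul_iff_left (by exact_mod_cast hp.ne_zero)).mp h
  · simp [powSubOneQuotOfDvd, h₁, hdvd_iff.not.mp h₁]

end

/-- for `c ∈ 1 + qW`, the function `f(n) = (c^{n/p} − 1)/n` (if `p ∣ n`,
else `0`) takes values in `W` on `ℤ_{≥1}` and is Lipschitz there. -/
theorem statement8 (p : ℕ) [Fact p.Prime] (u c : Wp p) (hc : c = 1 + (qq p : Wp p) * u) :
    let f : ℕ → Kp p :=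
      fun n => if p ∣ n then (iotaK p (c ^ (n / p)) - 1) / (n : Kp p) else 0
    (∀ n : ℕ, 1 ≤ n → f n ∈ (iotaK p).range) ∧
    (∀ n₁ n₂ : ℕ, 1 ≤ n₁ → 1 ≤ n₂ → ∀ m : ℕ,
      (p : ℤ) ^ m ∣ (n₁ : ℤ) - (n₂ : ℤ) →
        ∃ w : Wp p, f n₁ - f n₂ = (p : Kp p) ^ m * iotaK p w) := by
  intro f
  subst hc
  have hf (n : ℕ) (hn : 1 ≤ n) : f n = iotaK p (powSubOneQuotOfDvd p u n) :=
    (iotaK_powSubOneQuotOfDvd u (by omega)).symm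
  refine ⟨fun n hn => ⟨_, (hf n hn).symm⟩, fun n₁ n₂ h₁ h₂ m hm => ?_⟩
  obtain ⟨w, hw⟩ := pow_dvd_powSubOneQuotOfDvd_sub u (by omega) (by omega) hm
  exact ⟨w, by rw [hf n₁ h₁, hf n₂ h₂, ← map_sub, hw, map_mul, map_pow, map_natCast]⟩

end HGP
end
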